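/- Let E be a finite set of rational numbers with at most 10 elements such that x ∈ E implies −x ∈ E. Suppose there exist rationals b₁ ≤ b₂ such that every element of E lies in the closed interval [⌊b₁⌋, ⌈b₂⌉] (as rationals), and, whenever ⌈b₁⌉ ≤ ⌊b₂⌋, every integer n with ⌈b₁⌉ ≤ n ≤ ⌊b₂⌋ satisfies (n : ℚ) ∈ E. Then every integer m with (m : ℚ) ∈ E satisfies |m| ≤ 4. -/
import Mathlib


/-- If `E` is a set of at most 10 rationals closed under negation, and there are
rationals `b₁ ≤ b₂` such that `E ⊆ [⌊b₁⌋, ⌈b₂⌉]` and, whenever `⌈b₁⌉ ≤ ⌊b₂⌋`,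
every integer in `[⌈b₁⌉, ⌊b₂⌋]` belongs to `E`, then every integer `m` with
`(m : ℚ) ∈ E` satisfies `|m| ≤ 4`. -/
theorem stmt_12 (E : Finset ℚ) (hcard : E.card ≤ 10)
    (hsymm : ∀ x ∈ E, -x ∈ E)
    (h : ∃ b₁ b₂ : ℚ, b₁ ≤ b₂ ∧
      (∀ x ∈ E, ((⌊b₁⌋ : ℚ) ≤ x ∧ x ≤ (⌈b₂⌉ : ℚ))) ∧
      (⌈b₁⌉ ≤ ⌊b₂⌋ → ∀ n : ℤ, ⌈b₁⌉ ≤ n → n ≤ ⌊b₂⌋ → (n : ℚ) ∈ E)) :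
    ∀ m : ℤ, (m : ℚ) ∈ E → |m| ≤ 4 := by
  intro m hm
  by_contra hm4
  push_neg at hm4
  obtain ⟨b₁, b₂, hb, hbound, hint⟩ := h
  -- WLOG consider k = |m| ≥ 5, with (k : ℚ) ∈ E and (-k : ℚ) ∈ E
  set k : ℤ := |m| with hk
  have hk5 : 5 ≤ k := hm4
  have hkE : (k : ℚ) ∈ E ∧ (-(k : ℚ)) ∈ E := by
    rcases abs_choice m with h1 | h1
    · rw [hk, h1]; exact ⟨hm, hsymm _ hm⟩
    · rw [hk, h1]
      refine ⟨?_, ?_⟩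
      · push_cast; exact hsymm _ hm
      · push_cast; simpa using hm
  obtain ⟨hkE1, hkE2⟩ := hkE
  have h1 : (⌊b₁⌋ : ℚ) ≤ -(k : ℚ) := (hbound _ hkE2).1
  have h2 : ((k : ℚ)) ≤ (⌈b₂⌉ : ℚ) := (hbound _ hkE1).2
  have hf1 : ⌊b₁⌋ ≤ -k := by exact_mod_cast h1
  have hf2 : k ≤ ⌈b₂⌉ := by exact_mod_cast h2
  have hc1 : ⌈b₁⌉ ≤ ⌊b₁⌋ + 1 := Int.ceil_le_floor_add_one b₁
  have hc2 : ⌈b₂⌉ - 1 ≤ ⌊b₂⌋ := by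
    have := Int.ceil_le_floor_add_one b₂
    omega
  have hA : ⌈b₁⌉ ≤ -4 := by omega
  have hB : (4 : ℤ) ≤ ⌊b₂⌋ := by omega
  have hall : ∀ n : ℤ, -4 ≤ n → n ≤ 4 → (n : ℚ) ∈ E := fun n hn1 hn2 =>
    hint (by omega) n (by omega) (by omega)
  -- E contains the 11 distinct rationals from {-k, -4..4, k}
  have hsub : (insert (-k) (insert k (Finset.Icc (-4 : ℤ) 4))).image
      (fun n : ℤ => (n : ℚ)) ⊆ E := by
    intro x hx
    simp only [Finset.mem_image, Finset.mem_insert, Finset.mem_Icc] at hx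
    obtain ⟨n, hn, rfl⟩ := hx
    rcases hn with rfl | rfl | ⟨hn1, hn2⟩
    · push_cast; exact hkE2
    · exact hkE1
    · exact hall n hn1 hn2
  have hcard2 : (insert (-k) (insert k (Finset.Icc (-4 : ℤ) 4))).card = 11 := by
    rw [Finset.card_insert_of_notMem, Finset.card_insert_of_notMem]
    · simp
    · simp only [Finset.mem_Icc]; omega
    · simp only [Finset.mem_insert, Finset.mem_Icc]; omega
  have hle := Finset.card_le_card hsub
  rw [Finset.card_image_of_injective _ (fun a b hab => by exact_mod_cast hab), hcard2] at hle
  omega
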